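/- Let o₂ > 0 and K = K_{o₂}. Then: (a) for every y ∈ [0,1], |∂ₓK(1,y)| ≤ (o₂/2)·(1 + o₂/2)·e^{o₂(1 − y²)/4}; and (b) (∫₀¹ (∂ₓK(1,y))² dy)^{1/2} ≤ (o₂/2)·(1 + o₂/2)·e^{o₂/4}·(√(π/(2o₂))·erf(√(o₂/2)))^{1/2}. -/

import Mathlib

/-!
Writing `u = c(x² − y²)/4`, the kernel is `K_c(x, y) = −(c/2)·x·P₁(u)` with
`P_j(u) = ∑ uᵐ/(m!(m+j)!)`, and `P_j' = P_{j+1}`, so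
`∂ₓK_c(1, y) = −(c/2)(P₁(u) + (c/2)·P₂(u))`. For `u ≥ 0` each `P_j(u)` is dominated termwise by
`exp u`, which gives the pointwise bound. Squaring and integrating it over `[0, 1]` leaves the
Gaussian integral `∫₀¹ e^{−(c/2)y²} dy`, which the substitution `t = √(c/2)·y` turns into the
`erf` expression.
-/

/-- The backstepping kernel `K_c`. -/
noncomputable def Kker (c x y : ℝ) : ℝ :=
  -(c / 2) * x * ∑' m : ℕ, (c * (x ^ 2 - y ^ 2) / 4) ^ m /
    ((Nat.factorial m : ℝ) * (Nat.factorial (m + 1) : ℝ))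

/-- The error function `erf(x) = (2/√π)·∫₀ˣ e^{−t²} dt`. -/
noncomputable def erf (x : ℝ) : ℝ :=
  (2 / Real.sqrt Real.pi) * ∫ t in (0:ℝ)..x, Real.exp (-(t ^ 2))

open Real Set

/-- `u^{j/2} · besselSeries j u = I_j(2√u)`, the modified Bessel function of the first kind. -/
noncomputable def besselSeries (j : ℕ) (u : ℝ) : ℝ :=
  ∑' m : ℕ, u ^ m / ((m.factorial : ℝ) * ((m + j).factorial : ℝ))

lemma div_factorial_mul_factorial_le {a : ℝ} (ha : 0 ≤ a) (m j : ℕ) :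
    a / ((m.factorial : ℝ) * ((m + j).factorial : ℝ)) ≤ a / (m.factorial : ℝ) :=
  div_le_div_of_nonneg_left ha (by positivity) <|
    le_mul_of_one_le_right (by positivity) (Nat.one_le_cast.mpr (Nat.factorial_pos _))

lemma summable_besselSeries (j : ℕ) (u : ℝ) :
    Summable fun m : ℕ => u ^ m / ((m.factorial : ℝ) * ((m + j).factorial : ℝ)) := by
  refine .of_norm_bounded (Real.summable_pow_div_factorial |u|) fun m => ?_
  rw [norm_div, norm_pow, Real.norm_eq_abs, Real.norm_of_nonneg (by positivity)]
  exact div_factorial_mul_factorial_le (by positivity) m j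

lemma summable_mul_pow_pred_div_factorial (R : ℝ) :
    Summable fun m : ℕ => (m : ℝ) * R ^ (m - 1) / (m.factorial : ℝ) := by
  rw [← summable_nat_add_iff 1]
  refine (Real.summable_pow_div_factorial R).congr fun n => ?_
  rw [Nat.add_sub_cancel, Nat.factorial_succ]
  push_cast
  field_simp

lemma tsum_mul_pow_pred_div_eq_besselSeries_succ (j : ℕ) (u : ℝ)
    (hs : Summable fun m : ℕ =>
      (m : ℝ) * u ^ (m - 1) / ((m.factorial : ℝ) * ((m + j).factorial : ℝ))) :
    ∑' m : ℕ, (m : ℝ) * u ^ (m - 1) / ((m.factorial : ℝ) * ((m + j).factorial : ℝ)) =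
      besselSeries (j + 1) u := by
  rw [hs.tsum_eq_zero_add, besselSeries]
  simp only [Nat.cast_zero, zero_mul, zero_div, zero_add]
  congr 1 with n
  rw [show n + 1 + j = n + (j + 1) by omega, Nat.add_sub_cancel, Nat.factorial_succ n]
  push_cast
  field_simp

lemma hasDerivAt_besselSeries (j : ℕ) (u : ℝ) :
    HasDerivAt (besselSeries j) (besselSeries (j + 1) u) u := by
  set R := |u| + 1
  have hu : u ∈ Metric.ball (0 : ℝ) R := by simp [R]
  have hbound : ∀ (m : ℕ) (z : ℝ), |z| ≤ R →
      ‖(m : ℝ) * z ^ (m - 1) / ((m.factorial : ℝ) * ((m + j).factorial : ℝ))‖ ≤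
        (m : ℝ) * R ^ (m - 1) / (m.factorial : ℝ) := fun m z hz =>
    calc _ = (m : ℝ) * |z| ^ (m - 1) / ((m.factorial : ℝ) * ((m + j).factorial : ℝ)) := by
          rw [norm_div, norm_mul, norm_pow, Real.norm_natCast, Real.norm_eq_abs,
            Real.norm_of_nonneg (by positivity)]
      _ ≤ (m : ℝ) * |z| ^ (m - 1) / (m.factorial : ℝ) :=
          div_factorial_mul_factorial_le (by positivity) m j
      _ ≤ _ := by gcongr
  have hderiv := hasDerivAt_tsum_of_isPreconnected (summable_mul_pow_pred_div_factorial R)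
    Metric.isOpen_ball (convex_ball (0 : ℝ) R).isPreconnected
    (fun m z _ => (hasDerivAt_pow m z).div_const
      ((m.factorial : ℝ) * ((m + j).factorial : ℝ)))
    (fun m z hz => hbound m z (by simpa using (Metric.mem_ball.mp hz).le)) hu
    (summable_besselSeries j u) hu
  rwa [tsum_mul_pow_pred_div_eq_besselSeries_succ j u <|
    .of_norm_bounded (summable_mul_pow_pred_div_factorial R) fun m => hbound m u (by simp [R])]
    at hderiv

@[fun_prop]
lemma continuous_besselSeries (j : ℕ) : Continuous (besselSeries j) :=
  continuous_iff_continuousAt.mpr fun u => (hasDerivAt_besselSeries j u).continuousAt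

lemma besselSeries_nonneg (j : ℕ) {u : ℝ} (hu : 0 ≤ u) : 0 ≤ besselSeries j u :=
  tsum_nonneg fun _ => by positivity

lemma besselSeries_le_exp (j : ℕ) {u : ℝ} (hu : 0 ≤ u) : besselSeries j u ≤ exp u := by
  rw [exp_eq_exp_ℝ, NormedSpace.exp_eq_tsum_div]
  exact (summable_besselSeries j u).tsum_le_tsum
    (fun m => div_factorial_mul_factorial_le (by positivity) m j)
    (Real.summable_pow_div_factorial u)

lemma Kker_eq_besselSeries (c x y : ℝ) :
    Kker c x y = -(c / 2) * x * besselSeries 1 (c * (x ^ 2 - y ^ 2) / 4) :=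
  rfl

lemma hasDerivAt_Kker_fst (c x y : ℝ) :
    HasDerivAt (fun ξ => Kker c ξ y)
      (-(c / 2) * (besselSeries 1 (c * (x ^ 2 - y ^ 2) / 4) +
        c * x ^ 2 / 2 * besselSeries 2 (c * (x ^ 2 - y ^ 2) / 4))) x := by
  simp only [Kker_eq_besselSeries]
  have hu : HasDerivAt (fun ξ : ℝ => c * (ξ ^ 2 - y ^ 2) / 4) (c * x / 2) x :=
    ((((hasDerivAt_pow 2 x).sub_const (y ^ 2)).const_mul c).div_const 4).congr_deriv (by ring)
  refine (((hasDerivAt_id' x).const_mul (-(c / 2))).mul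
    ((hasDerivAt_besselSeries 1 _).comp x hu)).congr_deriv ?_
  simp only [Function.comp_apply]
  ring

lemma deriv_Kker_fst_one (c y : ℝ) :
    deriv (fun ξ => Kker c ξ y) 1 =
      -(c / 2) * (besselSeries 1 (c * (1 - y ^ 2) / 4) +
        c / 2 * besselSeries 2 (c * (1 - y ^ 2) / 4)) := by
  simpa using (hasDerivAt_Kker_fst c 1 y).deriv

lemma continuous_deriv_Kker_fst_one (c : ℝ) :
    Continuous fun y => deriv (fun ξ => Kker c ξ y) 1 := by
  simp only [deriv_Kker_fst_one]
  fun_prop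

lemma abs_deriv_Kker_fst_one_le {c y : ℝ} (hc : 0 ≤ c) (hy : |y| ≤ 1) :
    |deriv (fun ξ => Kker c ξ y) 1| ≤ c / 2 * (1 + c / 2) * exp (c * (1 - y ^ 2) / 4) := by
  set u := c * (1 - y ^ 2) / 4
  have hu : 0 ≤ u := by
    have : y ^ 2 ≤ 1 := (sq_le_one_iff_abs_le_one y).mpr hy
    positivity
  have h₁ := besselSeries_nonneg 1 hu
  have h₂ := besselSeries_nonneg 2 hu
  calc |deriv (fun ξ => Kker c ξ y) 1|
      = c / 2 * (besselSeries 1 u + c / 2 * besselSeries 2 u) := by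
        rw [deriv_Kker_fst_one, abs_mul, abs_neg, abs_of_nonneg (by positivity),
          abs_of_nonneg (by positivity)]
    _ ≤ c / 2 * (exp u + c / 2 * exp u) := by
        gcongr
        exacts [besselSeries_le_exp 1 hu, besselSeries_le_exp 2 hu]
    _ = c / 2 * (1 + c / 2) * exp u := by ring

lemma intervalIntegral_exp_neg_mul_sq_eq_erf {a : ℝ} (ha : 0 < a) :
    ∫ y in (0 : ℝ)..1, exp (-a * y ^ 2) = √(π / (4 * a)) * erf √a := by
  have hsa : 0 < √a := sqrt_pos.mpr ha
  have hsubst : ∫ t in (0 : ℝ)..√a, exp (-t ^ 2) = √a * ∫ y in (0 : ℝ)..1, exp (-a * y ^ 2) := by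
    have h := intervalIntegral.integral_comp_mul_left (a := 0) (b := 1)
      (fun t => exp (-t ^ 2)) hsa.ne'
    simp only [mul_pow, sq_sqrt ha.le, mul_zero, mul_one, smul_eq_mul, neg_mul] at h ⊢
    rw [h]
    field_simp
  have hconst : √(π / (4 * a)) * √a = √π / 2 := by
    rw [← sqrt_mul (by positivity), show π / (4 * a) * a = π / 2 ^ 2 by field_simp; ring,
      sqrt_div pi_pos.le, sqrt_sq zero_le_two]
  have hπ : 0 < √π := sqrt_pos.mpr pi_pos
  rw [erf, hsubst, show ∀ I, √(π / (4 * a)) * (2 / √π * (√a * I)) =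
    2 / √π * (√(π / (4 * a)) * √a) * I from fun I => by ring, hconst]
  field_simp

lemma sqrt_intervalIntegral_sq_le_of_abs_le {f g : ℝ → ℝ} {a b : ℝ} (hab : a ≤ b)
    (hf : IntervalIntegrable (fun y => f y ^ 2) MeasureTheory.volume a b)
    (hg : IntervalIntegrable (fun y => g y ^ 2) MeasureTheory.volume a b)
    (hfg : ∀ y ∈ Icc a b, |f y| ≤ g y) :
    √(∫ y in a..b, f y ^ 2) ≤ √(∫ y in a..b, g y ^ 2) :=
  sqrt_le_sqrt <| intervalIntegral.integral_mono_on hab hf hg fun y hy =>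
    sq_le_sq' (abs_le.mp (hfg y hy)).1 (abs_le.mp (hfg y hy)).2

lemma sqrt_intervalIntegral_sq_mul_exp {C : ℝ} (hC : 0 ≤ C) (c : ℝ) :
    √(∫ y in (0 : ℝ)..1, (C * exp (c * (1 - y ^ 2) / 4)) ^ 2) =
      C * exp (c / 4) * √(∫ y in (0 : ℝ)..1, exp (-(c / 2) * y ^ 2)) := by
  have hsq : ∀ y : ℝ, (C * exp (c * (1 - y ^ 2) / 4)) ^ 2 =
      (C * exp (c / 4)) ^ 2 * exp (-(c / 2) * y ^ 2) := fun y => by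
    rw [mul_pow, mul_pow, ← exp_nat_mul, ← exp_nat_mul, mul_assoc, ← exp_add]
    congr 2
    push_cast
    ring
  simp only [hsq, intervalIntegral.integral_const_mul]
  rw [sqrt_mul (sq_nonneg _), sqrt_sq (by positivity)]

/-- bounds on the `x`-derivative of the backstepping kernel along
the boundary `x = 1`: a pointwise bound and the resulting L² bound. -/
theorem kernel_x_derivative_bounds (o₂ : ℝ) (ho₂ : o₂ > 0) :
    (∀ y ∈ Set.Icc (0:ℝ) 1,
      |deriv (fun ξ => Kker o₂ ξ y) 1| ≤
        (o₂ / 2) * (1 + o₂ / 2) * Real.exp (o₂ * (1 - y ^ 2) / 4)) ∧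
    Real.sqrt (∫ y in (0:ℝ)..1, (deriv (fun ξ => Kker o₂ ξ y) 1) ^ 2) ≤
      (o₂ / 2) * (1 + o₂ / 2) * Real.exp (o₂ / 4) *
        Real.sqrt (Real.sqrt (Real.pi / (2 * o₂)) * erf (Real.sqrt (o₂ / 2))) := by
  have hpointwise : ∀ y ∈ Icc (0 : ℝ) 1, |deriv (fun ξ => Kker o₂ ξ y) 1| ≤
      o₂ / 2 * (1 + o₂ / 2) * exp (o₂ * (1 - y ^ 2) / 4) := fun y hy =>
    abs_deriv_Kker_fst_one_le ho₂.le (abs_le.mpr ⟨by linarith [hy.1], hy.2⟩)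
  refine ⟨hpointwise, ?_⟩
  have hgauss := intervalIntegral_exp_neg_mul_sq_eq_erf (half_pos ho₂)
  rw [show 4 * (o₂ / 2) = 2 * o₂ by ring] at hgauss
  calc √(∫ y in (0 : ℝ)..1, deriv (fun ξ => Kker o₂ ξ y) 1 ^ 2)
      ≤ √(∫ y in (0 : ℝ)..1, (o₂ / 2 * (1 + o₂ / 2) * exp (o₂ * (1 - y ^ 2) / 4)) ^ 2) :=
        sqrt_intervalIntegral_sq_le_of_abs_le zero_le_one
          (((continuous_deriv_Kker_fst_one o₂).pow 2).intervalIntegrable 0 1)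
          (Continuous.intervalIntegrable (by fun_prop) 0 1) hpointwise
    _ = _ := by rw [sqrt_intervalIntegral_sq_mul_exp (by positivity), hgauss]
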